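/- Let n be a natural number, L a set of primes, and G a closed subgroup of the product ∏_{ℓ∈L} GL_n(ℤ_ℓ). If G is group-theoretically independent, i.e. for all distinct ℓ₁, ℓ₂ ∈ L no finite simple group is, up to isomorphism, a continuous finite simple quotient of both pr_{ℓ₁}(G) and pr_{ℓ₂}(G), then G is independent, i.e. G = ∏_{ℓ∈L} pr_ℓ(G). -/

import Mathlib

open Matrix

instance (p : Nat.Primes) : Fact (p : ℕ).Prime := ⟨p.2⟩

/-- `S` is a continuous finite simple quotient of the topological group `H`:
there is a continuous surjective group homomorphism from `H` onto `S`,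
where `S` carries the discrete topology. -/
def IsContinuousQuotient (H : Type*) [Group H] [TopologicalSpace H]
    (S : Type*) [Group S] : Prop :=
  ∃ f : H →* S, Function.Surjective f ∧ @Continuous H S _ ⊥ f

/-!
Since `G` is closed, it suffices to show that `G` is dense in `∏ pr_ℓ(G)`, i.e. that for finitely
many `ℓ` and open normal subgroups `N_ℓ ⊴ pr_ℓ(G)` the map `G → ∏ pr_ℓ(G) / N_ℓ` is onto. The
finite groups `pr_ℓ(G) / N_ℓ` pairwise have no common simple quotient. A simple quotient of a
finite product is a quotient of one of the factors, and by Goursat's lemma a subdirect product of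
two finite groups without common simple quotient is the whole product; induction on the number
of factors concludes.
-/

open Function

universe u

theorem exists_surjective_isSimpleGroup (Q : Type u) [Group Q] [Finite Q] [Nontrivial Q] :
    ∃ (S : Type u) (_ : Group S) (_ : IsSimpleGroup S) (σ : Q →* S), Surjective σ := by
  obtain ⟨K, ⟨hKnormal, hKtop⟩, hKmax⟩ :=
    (Set.toFinite {K : Subgroup Q | K.Normal ∧ K ≠ ⊤}).exists_maximal
      ⟨⊥, Subgroup.normal_bot, bot_ne_top⟩
  have : Nontrivial (Q ⧸ K) := QuotientGroup.nontrivial_iff.mpr hKtop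
  refine ⟨Q ⧸ K, inferInstance, ⟨fun M hM => ?_⟩, QuotientGroup.mk' K,
    QuotientGroup.mk'_surjective K⟩
  have hcomap : K ≤ M.comap (QuotientGroup.mk' K) := fun k hk => by
    simp [(QuotientGroup.eq_one_iff k).mpr hk]
  have hmap := M.map_comap_eq_self_of_surjective (QuotientGroup.mk'_surjective K)
  by_cases htop : M.comap (QuotientGroup.mk' K) = ⊤
  · right
    rw [← hmap, htop, ← MonoidHom.range_eq_map, MonoidHom.range_eq_top]
    exact QuotientGroup.mk'_surjective K
  · left
    rw [← hmap, le_antisymm (hKmax ⟨hM.comap _, htop⟩ hcomap) hcomap, QuotientGroup.map_mk'_self]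

def NoCommonSimpleQuotient (A B : Type*) [Group A] [Group B] : Prop :=
  ∀ (S : Type) [Group S] [IsSimpleGroup S] (f : A →* S) (g : B →* S),
    Surjective f → Surjective g → False

theorem Pi.mulSingle_conj {ι : Type*} [DecidableEq ι] {Q : ι → Type*} [∀ i, Group (Q i)]
    (p : ∀ i, Q i) (i : ι) (q : Q i) :
    p * Pi.mulSingle i q * p⁻¹ = Pi.mulSingle i (p i * q * (p i)⁻¹) := by
  funext j
  by_cases hj : j = i
  · subst hj; simp
  · simp [hj]

theorem exists_surjective_comp_mulSingle_of_isSimpleGroup {ι : Type*} [Finite ι] [DecidableEq ι]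
    {Q : ι → Type*} [∀ i, Group (Q i)] {S : Type*} [Group S] [IsSimpleGroup S]
    {f : (∀ i, Q i) →* S} (hf : Surjective f) :
    ∃ i, Surjective (f.comp (MonoidHom.mulSingle Q i)) := by
  by_contra! hnot
  have hnormal (i : ι) : (f.comp (MonoidHom.mulSingle Q i)).range.Normal := by
    refine ⟨fun _ ⟨q, hq⟩ s => ?_⟩
    obtain ⟨p, rfl⟩ := hf s
    refine ⟨p i * q * (p i)⁻¹, ?_⟩
    rw [← hq]
    simp only [MonoidHom.comp_apply, MonoidHom.mulSingle_apply]
    rw [← Pi.mulSingle_conj, map_mul, map_mul, map_inv]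
  have htrivial : f = 1 := MonoidHom.pi_ext fun i q => by
    rcases IsSimpleGroup.eq_bot_or_eq_top_of_normal _ (hnormal i) with h | h
    · simpa using DFunLike.congr_fun (MonoidHom.range_eq_bot_iff.mp h) q
    · exact absurd (MonoidHom.range_eq_top.mp h) (hnot i)
  obtain ⟨s, hs⟩ := exists_ne (1 : S)
  obtain ⟨p, rfl⟩ := hf s
  exact hs (by simp [htrivial])

theorem MonoidHom.prod_surjective_of_noCommonSimpleQuotient {Γ Q₁ : Type*} {Q₂ : Type}
    [Group Γ] [Group Q₁] [Group Q₂] [Finite Q₂] {φ₁ : Γ →* Q₁} {φ₂ : Γ →* Q₂}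
    (h₁ : Surjective φ₁) (h₂ : Surjective φ₂) (h : NoCommonSimpleQuotient Q₁ Q₂) :
    Surjective (φ₁.prod φ₂) := by
  set E := φ₁.ker.map φ₂
  have hE : E = ⊤ := by
    by_contra hE
    have : E.Normal := φ₁.normal_ker.map φ₂ h₂
    have : Nontrivial (Q₂ ⧸ E) := QuotientGroup.nontrivial_iff.mpr hE
    obtain ⟨S, _, _, σ, hσ⟩ := exists_surjective_isSimpleGroup (Q₂ ⧸ E)
    -- `S` is then also a quotient of `Q₁`: `σ ∘ mk ∘ φ₂` kills `ker φ₁`, so factors through `φ₁`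
    set τ := σ.comp ((QuotientGroup.mk' E).comp φ₂)
    have hτ : φ₁.ker ≤ τ.ker := fun g hg => by
      have : (φ₂ g : Q₂ ⧸ E) = 1 := (QuotientGroup.eq_one_iff _).mpr ⟨g, hg, rfl⟩
      simp [τ, this]
    have hτ_surj : Surjective τ := hσ.comp ((QuotientGroup.mk'_surjective E).comp h₂)
    refine h S (φ₁.liftOfSurjective h₁ ⟨τ, hτ⟩) (σ.comp (QuotientGroup.mk' E)) ?_
      (hσ.comp (QuotientGroup.mk'_surjective E))
    exact Surjective.of_comp (g := φ₁) (by
      simpa [← MonoidHom.coe_comp, MonoidHom.liftOfRightInverse_comp] using hτ_surj)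
  rintro ⟨q₁, q₂⟩
  obtain ⟨g, rfl⟩ := h₁ q₁
  obtain ⟨d, hd, hd₂⟩ : (φ₂ g)⁻¹ * q₂ ∈ E := hE ▸ Subgroup.mem_top _
  exact ⟨g * d, by simp [MonoidHom.mem_ker.mp hd, hd₂]⟩

theorem exists_forall_mem_eq_of_pairwise_noCommonSimpleQuotient {Γ ι : Type*} [Group Γ]
    {Q : ι → Type} [∀ i, Group (Q i)] [∀ i, Finite (Q i)] {φ : ∀ i, Γ →* Q i}
    (hφ : ∀ i, Surjective (φ i)) (hQ : Pairwise fun i j => NoCommonSimpleQuotient (Q i) (Q j))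
    (F : Finset ι) (y : ∀ i, Q i) : ∃ g, ∀ i ∈ F, φ i g = y i := by
  classical
  induction F using Finset.induction_on generalizing y with
  | empty => exact ⟨1, by simp⟩
  | @insert a s ha ih =>
    set ψ : Γ →* ∀ i : s, Q i := MonoidHom.pi fun i => φ i
    have hψ : Surjective ψ := fun z => by
      obtain ⟨g, hg⟩ := ih fun i => if h : i ∈ s then z ⟨i, h⟩ else 1
      exact ⟨g, funext fun i => by simp [ψ, hg i i.2]⟩
    have hψa : NoCommonSimpleQuotient (∀ i : s, Q i) (Q a) := fun S _ _ f g hf hg => by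
      obtain ⟨i, hi⟩ := exists_surjective_comp_mulSingle_of_isSimpleGroup hf
      exact hQ (ne_of_mem_of_not_mem i.2 ha) S _ g hi hg
    obtain ⟨g, hg⟩ := MonoidHom.prod_surjective_of_noCommonSimpleQuotient hψ (hφ a) hψa
      (fun i : s => y i, y a)
    simp only [MonoidHom.prod_apply, Prod.mk.injEq, funext_iff] at hg
    exact ⟨g, (Finset.forall_mem_insert _ _ _).mpr ⟨hg.2, fun i hi => hg.1 ⟨i, hi⟩⟩⟩

theorem Continuous.totallyDisconnectedSpace_of_injective {α β : Type*} [TopologicalSpace α]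
    [TopologicalSpace β] [TotallyDisconnectedSpace β] {f : α → β} (hf : Continuous f)
    (hinj : Injective f) : TotallyDisconnectedSpace α :=
  ⟨fun _ _ hs => hinj.subsingleton_image_iff.mp (hs.image f hf.continuousOn).subsingleton⟩

instance Matrix.compactSpace {m n R : Type*} [TopologicalSpace R] [CompactSpace R] :
    CompactSpace (Matrix m n R) :=
  inferInstanceAs (CompactSpace (m → n → R))

instance Matrix.totallyDisconnectedSpace {m n R : Type*} [TopologicalSpace R]
    [TotallyDisconnectedSpace R] : TotallyDisconnectedSpace (Matrix m n R) :=
  inferInstanceAs (TotallyDisconnectedSpace (m → n → R))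

instance Units.totallyDisconnectedSpace {M : Type*} [Monoid M] [TopologicalSpace M]
    [TotallyDisconnectedSpace M] : TotallyDisconnectedSpace Mˣ :=
  Units.continuous_val.totallyDisconnectedSpace_of_injective Units.val_injective

theorem OpenNormalSubgroup.isContinuousQuotient {H S : Type*} [Group H] [TopologicalSpace H]
    [IsTopologicalGroup H] [Group S] (N : OpenNormalSubgroup H) {f : H ⧸ N.toSubgroup →* S}
    (hf : Surjective f) : IsContinuousQuotient H S := by
  let : TopologicalSpace S := ⊥
  have : DiscreteTopology S := ⟨rfl⟩
  exact ⟨f.comp (QuotientGroup.mk' _), hf.comp (QuotientGroup.mk'_surjective _),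
    (continuous_of_discreteTopology (f := f)).comp QuotientGroup.continuous_mk⟩

theorem exists_openNormalSubgroup_forall_inv_mul_mem {H : Type*} [Group H] [TopologicalSpace H]
    [IsTopologicalGroup H] [CompactSpace H] [TotallyDisconnectedSpace H] {U : Set H} {x : H}
    (hU : U ∈ nhds x) : ∃ N : OpenNormalSubgroup H, ∀ k, x⁻¹ * k ∈ N → k ∈ U := by
  obtain ⟨V, hVU, hV, hxV⟩ := mem_nhds_iff.mp hU
  obtain ⟨N, hN⟩ := ProfiniteGrp.exist_openNormalSubgroup_sub_open_nhds_of_one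
    (hV.preimage (continuous_const_mul x)) (by simpa using hxV)
  exact ⟨N, fun k hk => hVU (by simpa using hN hk)⟩

theorem Subgroup.eq_pi_map_evalMonoidHom_of_isClosed {ι : Type*} {A : ι → Type}
    [∀ i, Group (A i)] [∀ i, TopologicalSpace (A i)] [∀ i, IsTopologicalGroup (A i)]
    [∀ i, CompactSpace (A i)] [∀ i, TotallyDisconnectedSpace (A i)] {G : Subgroup (∀ i, A i)}
    (hG : IsClosed (G : Set (∀ i, A i)))
    (hind : Pairwise fun i j => ∀ (S : Type) [Group S] [Finite S] [IsSimpleGroup S],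
      ¬ (IsContinuousQuotient (G.map (Pi.evalMonoidHom A i)) S ∧
        IsContinuousQuotient (G.map (Pi.evalMonoidHom A j)) S)) :
    G = Subgroup.pi Set.univ fun i => G.map (Pi.evalMonoidHom A i) := by
  set P := fun i => G.map (Pi.evalMonoidHom A i)
  refine le_antisymm (fun g hg i _ => ⟨g, hg, rfl⟩) fun x hx => ?_
  have hxP (i : ι) : x i ∈ P i := hx i (Set.mem_univ i)
  have (i : ι) : CompactSpace (P i) := isCompact_iff_compactSpace.mp <| by
    simpa [P] using hG.isCompact.image (continuous_apply i)
  rw [← SetLike.mem_coe, ← hG.closure_eq, mem_closure_iff_nhds, nhds_pi]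
  intro o ho
  obtain ⟨I, t, ht, hIt⟩ := Filter.mem_pi'.mp ho
  choose N hN using fun i => exists_openNormalSubgroup_forall_inv_mul_mem
    (continuous_subtype_val.continuousAt.preimage_mem_nhds (ht i) : _ ∈ nhds (⟨x i, hxP i⟩ : P i))
  have hQ : Pairwise fun i j =>
      NoCommonSimpleQuotient (P i ⧸ (N i).toSubgroup) (P j ⧸ (N j).toSubgroup) :=
    fun i j hij S _ _ f g hf hg =>
      have : Finite S := Finite.of_surjective f hf
      hind hij S ⟨(N i).isContinuousQuotient hf, (N j).isContinuousQuotient hg⟩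
  obtain ⟨g, hg⟩ := exists_forall_mem_eq_of_pairwise_noCommonSimpleQuotient
    (φ := fun i => (QuotientGroup.mk' _).comp ((Pi.evalMonoidHom A i).subgroupMap G))
    (fun i => (QuotientGroup.mk'_surjective _).comp
      ((Pi.evalMonoidHom A i).subgroupMap_surjective G)) hQ I fun i => (⟨x i, hxP i⟩ : P i)
  exact ⟨g, hIt fun i hi => hN i _ (QuotientGroup.eq.mp (hg i hi).symm), g.2⟩

/-- If a closed subgroup `G` of `∏_{ℓ ∈ L} GL n ℤ_[ℓ]` is group-theoretically independent
(no finite simple group is a common continuous finite simple quotient of two distinct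
projections `pr_ℓ(G)`), then `G` is independent: `G = ∏_{ℓ ∈ L} pr_ℓ(G)`. -/
theorem stmt_2 (n : ℕ) (L : Set Nat.Primes)
    (G : Subgroup (Π ℓ : L, GL (Fin n) ℤ_[((ℓ : Nat.Primes) : ℕ)]))
    (hG : IsClosed (G : Set (Π ℓ : L, GL (Fin n) ℤ_[((ℓ : Nat.Primes) : ℕ)])))
    (hind : ∀ ℓ₁ ℓ₂ : L, ℓ₁ ≠ ℓ₂ →
      ∀ (S : Type) [Group S] [Finite S] [IsSimpleGroup S],
        ¬ (IsContinuousQuotient (G.map (Pi.evalMonoidHom _ ℓ₁)) S ∧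
           IsContinuousQuotient (G.map (Pi.evalMonoidHom _ ℓ₂)) S)) :
    G = Subgroup.pi Set.univ (fun ℓ : L => G.map (Pi.evalMonoidHom _ ℓ)) :=
  G.eq_pi_map_evalMonoidHom_of_isClosed hG hind
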